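/- The elements ρ_λ := ρ_{λ_1} ρ_{λ_2} ⋯ ρ_{λ_l}, indexed by partitions λ of n, form a basis of the degree-n homogeneous component of the ring of symmetric functions over ℚ(q), where ρ_n satisfies ρ_0 = 1 and ρ_n = (q^n - 1)h_n - Σ_{k=1}^{n-1} ρ_{n-k} h_k. -/

import Mathlib

open MvPolynomial Finset

noncomputable section

/-- The coefficient field `ℚ(q)`, with `q` an indeterminate. -/
abbrev K : Type := RatFunc ℚ

noncomputable def q : K := RatFunc.X

/-- The ring of symmetric functions over `ℚ(q)`, realized as the polynomial ring on the
algebraically independent complete homogeneous symmetric functions `h_1, h_2, …`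
(the variable indexed by `n : ℕ+` represents `h_n`; the grading of symmetric functions
corresponds to the weighted degree in which the variable `h_n` has weight `n`). -/
abbrev SymFn : Type := MvPolynomial ℕ+ K

/-- `h n` is the `n`-th complete homogeneous symmetric function (`h 0 = 1`). -/
noncomputable def h (n : ℕ) : SymFn := if hn : 0 < n then X (⟨n, hn⟩ : ℕ+) else 1

/-! The substitution `φ : h_i ↦ ρ_i` is a graded endomorphism of `Λ`, because `ρ_n` is homogeneous
of degree `n`. It is surjective: the recursion reads `(q^n - 1) h_n = ρ_n + ∑ ρ_{n-k} h_k` and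
`q^n ≠ 1`, so inductively every `h_n` lies in the image. A surjective graded map sends each
homogeneous component `Λ^n` onto itself, so the `ρ_λ = φ(h_λ)` span `Λ^n`; there are exactly as
many of them as elements of the basis `h_λ`, hence they are linearly independent. -/

theorem LinearIndependent.of_span_eq_span {𝕜 M ι : Type*} [DivisionRing 𝕜] [AddCommGroup M]
    [Module 𝕜 M] [Fintype ι] {v w : ι → M} (hv : LinearIndependent 𝕜 v)
    (hspan : Submodule.span 𝕜 (Set.range w) = Submodule.span 𝕜 (Set.range v)) :
    LinearIndependent 𝕜 w := by
  rw [linearIndependent_iff_card_eq_finrank_span, Set.finrank, hspan, ← Set.finrank,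
    ← linearIndependent_iff_card_eq_finrank_span]
  exact hv

theorem Finsupp.weight_toFinsupp {σ M : Type*} [AddCommMonoid M] [DecidableEq σ] (w : σ → M)
    (s : Multiset σ) : weight w (Multiset.toFinsupp s) = (s.map w).sum := by
  induction s using Multiset.induction_on with
  | empty => simp
  | cons a s ih =>
    rw [← Multiset.singleton_add, map_add, map_add, Multiset.toFinsupp_singleton, ih]
    simp [weight_single]

namespace MvPolynomial

theorem monomial_toFinsupp_one {σ R : Type*} [CommSemiring R] [DecidableEq σ] (s : Multiset σ) :
    monomial (Multiset.toFinsupp s) (1 : R) = (s.map X).prod := by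
  induction s using Multiset.induction_on with
  | empty => simp
  | cons a s ih =>
    rw [← Multiset.singleton_add, map_add, Multiset.toFinsupp_singleton, ← mul_one (1 : R),
      ← monomial_mul, ih, Multiset.map_add, Multiset.prod_add, Multiset.map_singleton,
      Multiset.prod_singleton, X]

section WeightedAeval

variable {σ τ R M : Type*} [CommSemiring R] [AddCommMonoid M] {w : σ → M} {w' : τ → M}
  {g : σ → MvPolynomial τ R}

theorem isWeightedHomogeneous_aeval_monomial (hg : ∀ i, (g i).IsWeightedHomogeneous w' (w i))
    (d : σ →₀ ℕ) (r : R) :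
    (aeval g (monomial d r)).IsWeightedHomogeneous w' (Finsupp.weight w d) := by
  rw [aeval_monomial, ← C_eq_algebraMap, Finsupp.weight_apply, Finsupp.sum, Finsupp.prod]
  exact (IsWeightedHomogeneous.prod _ _ _ fun i _ => (hg i).pow (d i)).C_mul r

theorem IsWeightedHomogeneous.aeval (hg : ∀ i, (g i).IsWeightedHomogeneous w' (w i))
    {p : MvPolynomial σ R} {m : M} (hp : p.IsWeightedHomogeneous w m) :
    (aeval g p).IsWeightedHomogeneous w' m := by
  rw [p.as_sum, map_sum]
  refine IsWeightedHomogeneous.sum _ _ _ fun d hd => ?_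
  rw [← hp (mem_support_iff.mp hd)]
  exact isWeightedHomogeneous_aeval_monomial hg d _

theorem weightedHomogeneousComponent_aeval (hg : ∀ i, (g i).IsWeightedHomogeneous w' (w i))
    (m : M) (p : MvPolynomial σ R) :
    weightedHomogeneousComponent w' m (aeval g p) =
      aeval g (weightedHomogeneousComponent w m p) := by
  classical
  rw [p.as_sum]
  simp only [map_sum]
  refine Finset.sum_congr rfl fun d _ => ?_
  have hd := isWeightedHomogeneous_monomial w d (coeff d p) rfl
  have hgd := isWeightedHomogeneous_aeval_monomial hg d (coeff d p)
  by_cases hdm : Finsupp.weight w d = m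
  · rw [← hdm, hgd.weightedHomogeneousComponent_same, hd.weightedHomogeneousComponent_same]
  · rw [hgd.weightedHomogeneousComponent_ne m (Ne.symm hdm),
      hd.weightedHomogeneousComponent_ne m (Ne.symm hdm), map_zero]

theorem map_aeval_weightedHomogeneousSubmodule (hg : ∀ i, (g i).IsWeightedHomogeneous w' (w i))
    (hsurj : Function.Surjective (aeval g : MvPolynomial σ R →ₐ[R] MvPolynomial τ R)) (m : M) :
    (weightedHomogeneousSubmodule R w m).map (aeval g).toLinearMap =
      weightedHomogeneousSubmodule R w' m := by
  refine le_antisymm (Submodule.map_le_iff_le_comap.mpr fun p hp => hp.aeval hg) fun y hy => ?_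
  obtain ⟨x, rfl⟩ := hsurj y
  refine ⟨weightedHomogeneousComponent w m x,
    weightedHomogeneousComponent_isWeightedHomogeneous m x, ?_⟩
  rw [AlgHom.toLinearMap_apply, ← weightedHomogeneousComponent_aeval hg,
    (hy : IsWeightedHomogeneous w' _ m).weightedHomogeneousComponent_same]

end WeightedAeval

end MvPolynomial

namespace Nat.Partition

variable {n : ℕ}

def pnatParts (lam : n.Partition) : Multiset ℕ+ := lam.parts.map Nat.toPNat'

theorem map_coe_pnatParts (lam : n.Partition) : lam.pnatParts.map (↑) = lam.parts := by
  rw [pnatParts, Multiset.map_map]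
  exact (Multiset.map_congr rfl fun k hk => PNat.toPNat'_coe (lam.parts_pos hk)).trans
    lam.parts.map_id

theorem pnatParts_injective : Function.Injective (pnatParts (n := n)) := fun a b hab =>
  Nat.Partition.ext <| by rw [← map_coe_pnatParts a, ← map_coe_pnatParts b, hab]

theorem exists_pnatParts_eq {s : Multiset ℕ+} (hs : (s.map (↑)).sum = n) :
    ∃ lam : n.Partition, lam.pnatParts = s :=
  ⟨⟨s.map (↑), fun hi => by obtain ⟨j, _, rfl⟩ := Multiset.mem_map.mp hi; exact j.pos, hs⟩,
    by simp [pnatParts]⟩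

end Nat.Partition

theorem h_of_pos {k : ℕ} (hk : 0 < k) : h k = X k.toPNat' := by
  rw [h, dif_pos hk]
  exact congrArg X (PNat.eq (PNat.toPNat'_coe hk).symm)

theorem isWeightedHomogeneous_h (n : ℕ) :
    (h n).IsWeightedHomogeneous (fun i : ℕ+ => (i : ℕ)) n := by
  rcases Nat.eq_zero_or_pos n with rfl | hn
  · simpa [h] using isWeightedHomogeneous_one K _
  · rw [h_of_pos hn]
    simpa [PNat.toPNat'_coe hn] using isWeightedHomogeneous_X K (fun i : ℕ+ => (i : ℕ)) n.toPNat'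

theorem prod_map_h_eq_monomial {n : ℕ} (lam : n.Partition) :
    (lam.parts.map h).prod = monomial (Multiset.toFinsupp lam.pnatParts) 1 := by
  rw [monomial_toFinsupp_one, Nat.Partition.pnatParts, Multiset.map_map]
  exact congrArg _ (Multiset.map_congr rfl fun k hk => h_of_pos (lam.parts_pos hk))

theorem linearIndependent_prod_map_h (n : ℕ) :
    LinearIndependent K (fun lam : n.Partition => (lam.parts.map h).prod) := by
  simp_rw [prod_map_h_eq_monomial]
  have hmonomials := (basisMonomials ℕ+ K).linearIndependent
  rw [coe_basisMonomials] at hmonomials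
  exact hmonomials.comp _ (Multiset.toFinsupp.injective.comp Nat.Partition.pnatParts_injective)

theorem span_prod_map_h (n : ℕ) :
    Submodule.span K (Set.range fun lam : n.Partition => (lam.parts.map h).prod) =
      weightedHomogeneousSubmodule K (fun i : ℕ+ => (i : ℕ)) n := by
  rw [weightedHomogeneousSubmodule_eq_finsupp_supported,
    AddMonoidAlgebra.supported_eq_span_single]
  congr 1
  ext p
  simp only [Set.mem_range, Set.mem_image, Set.mem_ofPred_eq, prod_map_h_eq_monomial]
  constructor
  · rintro ⟨lam, rfl⟩
    refine ⟨_, ?_, rfl⟩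
    rw [Finsupp.weight_toFinsupp, Nat.Partition.map_coe_pnatParts, lam.parts_sum]
  · rintro ⟨d, hd, rfl⟩
    obtain ⟨lam, hlam⟩ := Nat.Partition.exists_pnatParts_eq (s := Finsupp.toMultiset d)
      (by rw [← Finsupp.weight_toFinsupp, Finsupp.toMultiset_toFinsupp, hd])
    exact ⟨lam, by rw [hlam, Finsupp.toMultiset_toFinsupp]; rfl⟩

theorem q_pow_ne_one {n : ℕ} (hn : n ≠ 0) : q ^ n ≠ 1 := by
  intro hq
  have hdeg := congrArg RatFunc.intDegree hq
  rw [q, ← RatFunc.algebraMap_X, ← map_pow, RatFunc.intDegree_polynomial] at hdeg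
  simp [hn] at hdeg

section Rho

variable {ρ : ℕ → SymFn}

theorem isWeightedHomogeneous_rho (hρ0 : ρ 0 = 1)
    (hρ : ∀ n, 1 ≤ n →
      ρ n = C (q ^ n - 1) * h n - ∑ k ∈ Finset.Icc 1 (n - 1), ρ (n - k) * h k) (n : ℕ) :
    (ρ n).IsWeightedHomogeneous (fun i : ℕ+ => (i : ℕ)) n := by
  induction n using Nat.strong_induction_on with
  | _ n ih =>
    rcases Nat.eq_zero_or_pos n with rfl | hn
    · rw [hρ0]
      exact isWeightedHomogeneous_one K _
    rw [hρ n hn]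
    refine ((isWeightedHomogeneous_h n).C_mul _).sub <|
      IsWeightedHomogeneous.sum _ _ _ fun k hk => ?_
    rw [Finset.mem_Icc] at hk
    simpa [Nat.sub_add_cancel (by omega : k ≤ n)] using
      (ih (n - k) (by omega)).mul (isWeightedHomogeneous_h k)

theorem aeval_rho_h (hρ0 : ρ 0 = 1) (n : ℕ) : aeval (fun i : ℕ+ => ρ i) (h n) = ρ n := by
  rcases Nat.eq_zero_or_pos n with rfl | hn
  · simp [h, hρ0]
  · simp [h_of_pos hn, PNat.toPNat'_coe hn]

theorem aeval_rho_surjective (hρ0 : ρ 0 = 1)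
    (hρ : ∀ n, 1 ≤ n →
      ρ n = C (q ^ n - 1) * h n - ∑ k ∈ Finset.Icc 1 (n - 1), ρ (n - k) * h k) :
    Function.Surjective (aeval (R := K) fun i : ℕ+ => ρ i) := by
  set φ : SymFn →ₐ[K] SymFn := aeval fun i : ℕ+ => ρ i
  have h_mem_range : ∀ n, h n ∈ φ.range := by
    intro n
    induction n using Nat.strong_induction_on with
    | _ n ih =>
      rcases Nat.eq_zero_or_pos n with rfl | hn
      · simp [h]
      have hrec : (q ^ n - 1) • h n = ρ n + ∑ k ∈ Finset.Icc 1 (n - 1), ρ (n - k) * h k := by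
        rw [smul_eq_C_mul, hρ n hn, sub_add_cancel]
      rw [← Subalgebra.mem_toSubmodule,
        ← Submodule.smul_mem_iff _ (sub_ne_zero.mpr (q_pow_ne_one hn.ne')), hrec,
        Subalgebra.mem_toSubmodule]
      refine add_mem ⟨h n, aeval_rho_h hρ0 n⟩ <| sum_mem fun k hk => ?_
      rw [Finset.mem_Icc] at hk
      exact mul_mem ⟨h (n - k), aeval_rho_h hρ0 _⟩ (ih k (by omega))
  rw [← AlgHom.range_eq_top, eq_top_iff, ← adjoin_range_X, Algebra.adjoin_le_iff]
  rintro _ ⟨i, rfl⟩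
  simpa [h_of_pos i.pos] using h_mem_range i

end Rho

/-- With `ρ_0 = 1` and `ρ_n = (q^n - 1) h_n - ∑_{k=1}^{n-1} ρ_{n-k} h_k`, the products
`ρ_λ = ρ_{λ_1} ⋯ ρ_{λ_l}`, indexed by the partitions `λ` of `n`, form a basis of the
degree-`n` homogeneous component of the ring of symmetric functions over `ℚ(q)`. -/
theorem stmt_18 (ρ : ℕ → SymFn) (hρ0 : ρ 0 = 1)
    (hρ : ∀ n, 1 ≤ n →
      ρ n = C (q ^ n - 1) * h n - ∑ k ∈ Finset.Icc 1 (n - 1), ρ (n - k) * h k)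
    (n : ℕ) :
    LinearIndependent K (fun lam : n.Partition => (lam.parts.map ρ).prod) ∧
      Submodule.span K (Set.range fun lam : n.Partition => (lam.parts.map ρ).prod) =
        weightedHomogeneousSubmodule K (fun i : ℕ+ => (i : ℕ)) n := by
  have hρ_prod : (fun lam : n.Partition => (lam.parts.map ρ).prod) =
      (aeval fun i : ℕ+ => ρ i).toLinearMap ∘ fun lam => (lam.parts.map h).prod := by
    ext1 lam
    rw [Function.comp_apply, AlgHom.toLinearMap_apply, map_multiset_prod, Multiset.map_map]
    exact congrArg _ (Multiset.map_congr rfl fun k _ => (aeval_rho_h hρ0 k).symm)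
  have hspan : Submodule.span K (Set.range fun lam : n.Partition => (lam.parts.map ρ).prod) =
      weightedHomogeneousSubmodule K (fun i : ℕ+ => (i : ℕ)) n := by
    rw [hρ_prod, Set.range_comp, Submodule.span_image, span_prod_map_h,
      map_aeval_weightedHomogeneousSubmodule (g := fun i : ℕ+ => ρ i)
        (isWeightedHomogeneous_rho hρ0 hρ ·) (aeval_rho_surjective hρ0 hρ)]
  exact ⟨(linearIndependent_prod_map_h n).of_span_eq_span
    (hspan.trans (span_prod_map_h n).symm), hspan⟩

end
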